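/- Let A be an associative unital ring. For all a, b, c, x, y ∈ A and every integer n ≥ 0, the following identity holds: ad_{a,c}ⁿ(x·y) = Σ_{k=0}ⁿ C(n, k) · ad_{a,b}^{k}(x) · ad_{b,c}^{n−k}(y). -/

import Mathlib

/-!
The operator `ad_{a,c}` satisfies the twisted Leibniz rule
`ad_{a,c}(xy) = ad_{a,b}(x) y + x ad_{b,c}(y)`. On `A ⊗ A` this says that multiplication
intertwines `ad_{a,c}` with `ad_{a,b} ⊗ 1 + 1 ⊗ ad_{b,c}`; the two summands commute, so the
`n`-th power of their sum is given by the binomial theorem.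
-/

/-- `adOp a b x = a*x - x*b`, the operator `ad_{a,b}`. -/
def adOp {A : Type*} [Ring A] (a b : A) : A → A := fun x => a * x - x * b

open TensorProduct

namespace LinearMap

variable {R A : Type*} [CommSemiring R] [Semiring A] [Algebra R A]

theorem iterate_map_mul_of_twisted_leibniz {f g h : A →ₗ[R] A}
    (hfgh : ∀ x y, h (x * y) = f x * y + x * g y) (n : ℕ) (x y : A) :
    h^[n] (x * y) = ∑ j ∈ Finset.range (n + 1), n.choose j • (f^[j] x * g^[n - j] y) := by
  set D := f.rTensor A + g.lTensor A
  have hmul : Function.Semiconj (mul' R A) D h := by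
    suffices mul' R A ∘ₗ D = h ∘ₗ mul' R A from fun t => congr($this t)
    ext x y
    simp [D, hfgh]
  have hcomm : Commute (f.rTensor A) (g.lTensor A) := by
    rw [commute_iff_eq, Module.End.mul_eq_comp, Module.End.mul_eq_comp, rTensor_comp_lTensor,
      lTensor_comp_rTensor]
  calc h^[n] (x * y) = mul' R A (D^[n] (x ⊗ₜ y)) := by
        rw [← mul'_apply (R := R), ← Function.comp_apply (f := h^[n]),
          ← (hmul.iterate_right n).comp_eq]
        rfl
    _ = _ := by
        rw [← Module.End.coe_pow, hcomm.add_pow', Finset.Nat.sum_antidiagonal_eq_sum_range_succ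
          (fun i j => n.choose i • (f.rTensor A ^ i * g.lTensor A ^ j))]
        simp only [sum_apply, smul_apply, map_sum, map_nsmul, Module.End.mul_apply, rTensor_pow,
          lTensor_pow, lTensor_tmul, rTensor_tmul, Module.End.pow_apply, mul'_apply]

end LinearMap

section adOp

variable {A : Type*} [Ring A]

def adOpLinear (a b : A) : A →ₗ[ℤ] A := LinearMap.mulLeft ℤ a - LinearMap.mulRight ℤ b

theorem coe_adOpLinear (a b : A) : ⇑(adOpLinear a b) = adOp a b := rfl

theorem adOp_mul (a b c x y : A) : adOp a c (x * y) = adOp a b x * y + x * adOp b c y := by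
  simp only [adOp]
  noncomm_ring

end adOp

/-- The twisted Leibniz identity (coad), equivalent to Lemma 4.7:
`ad_{a,c}^n (x*y) = Σ_{k=0}^n C(n,k) ad_{a,b}^k(x) · ad_{b,c}^{n-k}(y)`. -/
theorem stmt3 {A : Type*} [Ring A] (a b c x y : A) (n : ℕ) :
    (adOp a c)^[n] (x * y) =
      ∑ j ∈ Finset.range (n + 1),
        (n.choose j) • ((adOp a b)^[j] x * (adOp b c)^[n - j] y) := by
  simpa only [coe_adOpLinear] using
    LinearMap.iterate_map_mul_of_twisted_leibniz (f := adOpLinear a b) (g := adOpLinear b c)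
      (h := adOpLinear a c) (adOp_mul a b c) n x y
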